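/- With V, λᵢ as above and Z₃ = I_N ⊗ I_2 ⊗ I_n ⊗ 1_{N₁}, the trace of V⁻¹ Z₃ Z₃ᵀ equals (1/λ₁)·N·2(n−1)·N₁ + (1/λ₂)·N·N₁ + (1/λ₃)·N·N₁. -/

import Mathlib

/-!
The covariance matrix `V` is a combination of the nested averaging projections
`1 = Q₀ ≥ Q₁ ≥ Q₂ ≥ Q₃ ≥ Q₄ = 0`, where `Qₖ` averages over the `k` innermost Kronecker factors.
Their successive differences `Pₖ = Qₖ - Qₖ₊₁` form a complete family of orthogonal idempotents
and `V = ∑ λₖ Pₖ`, hence `V⁻¹ = ∑ λₖ⁻¹ Pₖ`. Since `Z₃ Z₃ᵀ = N₁ Q₁ = N₁ (P₁ + P₂ + P₃)`, the trace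
is `N₁ ∑_{k ≥ 1} tr Pₖ / λₖ` with `tr P₁ = 2N(n - 1)` and `tr P₂ = tr P₃ = N`.
-/

open Matrix
open scoped Kronecker

noncomputable def Jmat (a : ℕ) : Matrix (Fin a) (Fin a) ℝ := fun _ _ => 1

/-- The all-ones column vector `1_a`, as an `a × 1` matrix. -/
noncomputable def onesCol (a : ℕ) : Matrix (Fin a) (Fin 1) ℝ := fun _ _ => 1

noncomputable def Vmat (N n N₁ : ℕ) (σe2 σ12 σ22 σ32 : ℝ) :
    Matrix (((Fin N × Fin 2) × Fin n) × Fin N₁) (((Fin N × Fin 2) × Fin n) × Fin N₁) ℝ :=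
  σe2 • ((((1 : Matrix (Fin N) (Fin N) ℝ) ⊗ₖ (1 : Matrix (Fin 2) (Fin 2) ℝ)) ⊗ₖ
            (1 : Matrix (Fin n) (Fin n) ℝ)) ⊗ₖ (1 : Matrix (Fin N₁) (Fin N₁) ℝ))
  + σ32 • ((((1 : Matrix (Fin N) (Fin N) ℝ) ⊗ₖ Jmat 2) ⊗ₖ Jmat n) ⊗ₖ Jmat N₁)
  + σ22 • ((((1 : Matrix (Fin N) (Fin N) ℝ) ⊗ₖ (1 : Matrix (Fin 2) (Fin 2) ℝ)) ⊗ₖ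
            Jmat n) ⊗ₖ Jmat N₁)
  + σ12 • ((((1 : Matrix (Fin N) (Fin N) ℝ) ⊗ₖ (1 : Matrix (Fin 2) (Fin 2) ℝ)) ⊗ₖ
            (1 : Matrix (Fin n) (Fin n) ℝ)) ⊗ₖ Jmat N₁)

/-- The design matrix `Z₃ = I_N ⊗ I_2 ⊗ I_n ⊗ 1_{N₁}`. -/
noncomputable def Z3 (N n N₁ : ℕ) :
    Matrix (((Fin N × Fin 2) × Fin n) × Fin N₁) (((Fin N × Fin 2) × Fin n) × Fin 1) ℝ :=
  (((1 : Matrix (Fin N) (Fin N) ℝ) ⊗ₖ (1 : Matrix (Fin 2) (Fin 2) ℝ)) ⊗ₖ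
      (1 : Matrix (Fin n) (Fin n) ℝ)) ⊗ₖ onesCol N₁

theorem OrthogonalIdempotents.sum_smul_mul_sum_smul {K R I : Type*} [CommSemiring K] [Semiring R]
    [Algebra K R] [Fintype I] {e : I → R} (he : OrthogonalIdempotents e) (a b : I → K) :
    (∑ i, a i • e i) * ∑ i, b i • e i = ∑ i, (a i * b i) • e i := by
  classical
  simp_rw [Finset.sum_mul, Finset.mul_sum, smul_mul_smul_comm, he.mul_eq, smul_ite, smul_zero,
    Finset.sum_ite_eq]
  simp

theorem CompleteOrthogonalIdempotents.sum_smul_mul_sum_inv_smul {K R I : Type*} [Semifield K]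
    [Semiring R] [Algebra K R] [Fintype I] {e : I → R} (he : CompleteOrthogonalIdempotents e)
    {a : I → K} (ha : ∀ i, a i ≠ 0) : (∑ i, a i • e i) * ∑ i, (a i)⁻¹ • e i = 1 := by
  simp [he.toOrthogonalIdempotents.sum_smul_mul_sum_smul, mul_inv_cancel₀ (ha _), he.complete]

/-- `Q i * Q j = Q (max i j)` encodes a decreasing chain `1 = Q 0 ≥ Q 1 ≥ ⋯ ≥ Q m = 0` of
commuting projections. -/
theorem completeOrthogonalIdempotents_sub_succ {R : Type*} [Ring R] {Q : ℕ → R} {m : ℕ}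
    (hmul : ∀ i j, Q i * Q j = Q (max i j)) (h0 : Q 0 = 1) (hm : Q m = 0) :
    CompleteOrthogonalIdempotents fun i : Fin m => Q i - Q (i + 1) := by
  refine CompleteOrthogonalIdempotents.iff_ortho_complete.2 ⟨fun i j hij => ?_, ?_⟩
  · have hij : (i : ℕ) ≠ j := Fin.val_ne_of_ne hij
    rcases Nat.lt_or_gt_of_ne hij with h | h <;>
      simp (disch := omega) only [sub_mul, mul_sub, hmul, max_eq_left, max_eq_right] <;> abel
  · rw [Fin.sum_univ_eq_sum_range (fun i => Q i - Q (i + 1)), Finset.sum_range_sub', h0, hm,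
      sub_zero]

theorem Jmat_mul_Jmat (a : ℕ) : Jmat a * Jmat a = (a : ℝ) • Jmat a := by
  ext i j
  simp [Jmat, mul_apply]

theorem onesCol_mul_transpose (a : ℕ) : onesCol a * (onesCol a)ᵀ = Jmat a := by
  ext i j
  simp [onesCol, Jmat, mul_apply]

noncomputable def avgMat (a : ℕ) : Matrix (Fin a) (Fin a) ℝ := (a : ℝ)⁻¹ • Jmat a

theorem Jmat_eq_smul_avgMat (a : ℕ) : Jmat a = (a : ℝ) • avgMat a := by
  rcases eq_or_ne a 0 with rfl | ha
  · exact Subsingleton.elim _ _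
  · rw [avgMat, smul_smul, mul_inv_cancel₀ (Nat.cast_ne_zero.2 ha), one_smul]

theorem avgMat_mul_avgMat (a : ℕ) : avgMat a * avgMat a = avgMat a := by
  rcases eq_or_ne a 0 with rfl | ha
  · exact Subsingleton.elim _ _
  · rw [avgMat, smul_mul_smul_comm, Jmat_mul_Jmat, smul_smul,
      inv_mul_cancel_right₀ (Nat.cast_ne_zero.2 ha)]

theorem trace_avgMat {a : ℕ} (ha : a ≠ 0) : (avgMat a).trace = 1 := by
  simp [avgMat, Jmat, trace, ha]

abbrev CRTIndex (N n N₁ : ℕ) := ((Fin N × Fin 2) × Fin n) × Fin N₁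

/-- `levelAvg k` is `Qₖ`, and `levelProj k` below is `Pₖ`, in the decomposition `V = ∑ λₖ Pₖ`. -/
noncomputable def levelAvg (N n N₁ : ℕ) : ℕ → Matrix (CRTIndex N n N₁) (CRTIndex N n N₁) ℝ
  | 0 => 1
  | 1 => ((1 ⊗ₖ 1) ⊗ₖ 1) ⊗ₖ avgMat N₁
  | 2 => ((1 ⊗ₖ 1) ⊗ₖ avgMat n) ⊗ₖ avgMat N₁
  | 3 => ((1 ⊗ₖ avgMat 2) ⊗ₖ avgMat n) ⊗ₖ avgMat N₁
  | _ => 0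

theorem levelAvg_mul_levelAvg (N n N₁ i j : ℕ) :
    levelAvg N n N₁ i * levelAvg N n N₁ j = levelAvg N n N₁ (max i j) := by
  rcases i with _ | _ | _ | _ | i <;> rcases j with _ | _ | _ | _ | j <;>
    simp [levelAvg, ← mul_kronecker_mul, avgMat_mul_avgMat]

noncomputable def levelProj (N n N₁ : ℕ) (i : Fin 4) :
    Matrix (CRTIndex N n N₁) (CRTIndex N n N₁) ℝ :=
  levelAvg N n N₁ i - levelAvg N n N₁ (i + 1)

theorem completeOrthogonalIdempotents_levelProj (N n N₁ : ℕ) :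
    CompleteOrthogonalIdempotents (levelProj N n N₁) :=
  completeOrthogonalIdempotents_sub_succ (levelAvg_mul_levelAvg N n N₁) rfl rfl

theorem trace_levelProj {N n N₁ : ℕ} (hn : n ≠ 0) (hN₁ : N₁ ≠ 0) (i : Fin 4) :
    (levelProj N n N₁ i).trace = ![2 * N * n * ((N₁ : ℝ) - 1), 2 * N * ((n : ℝ) - 1), N, N] i := by
  fin_cases i <;>
    simp only [levelProj, levelAvg, one_kronecker_one, trace_sub, sub_zero, trace_kronecker,
      trace_one, trace_avgMat hn, trace_avgMat hN₁, trace_avgMat two_ne_zero, Fintype.card_prod,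
      Fintype.card_fin, Nat.cast_mul, Nat.cast_ofNat, Nat.reduceAdd, Fin.zero_eta, Fin.mk_one,
      Fin.reduceFinMk, cons_val_zero, cons_val_one, cons_val] <;>
    ring

theorem Vmat_eq_sum_smul_levelProj (N n N₁ : ℕ) (σe2 σ12 σ22 σ32 : ℝ) :
    Vmat N n N₁ σe2 σ12 σ22 σ32 = ∑ i, ![σe2, σe2 + N₁ * σ12, σe2 + N₁ * σ12 + n * N₁ * σ22,
      σe2 + N₁ * σ12 + n * N₁ * σ22 + 2 * n * N₁ * σ32] i • levelProj N n N₁ i := by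
  simp only [Vmat, Jmat_eq_smul_avgMat, smul_kronecker, kronecker_smul, one_kronecker_one,
    Fin.sum_univ_four, levelProj, levelAvg, Fin.isValue, cons_val_zero, cons_val_one, cons_val,
    Fin.coe_ofNat_eq_mod, Nat.reduceMod, Nat.reduceAdd, Nat.cast_ofNat]
  module

theorem Z3_mul_transpose_eq_sum_smul_levelProj (N n N₁ : ℕ) :
    Z3 N n N₁ * (Z3 N n N₁)ᵀ = ∑ i, ![0, (N₁ : ℝ), N₁, N₁] i • levelProj N n N₁ i := by
  simp only [Z3, ← kroneckerMap_transpose, transpose_one, ← mul_kronecker_mul,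
    onesCol_mul_transpose, Matrix.one_mul, Jmat_eq_smul_avgMat, kronecker_smul,
    Fin.sum_univ_four, levelProj, levelAvg, Fin.isValue, cons_val_zero, cons_val_one, cons_val,
    Fin.coe_ofNat_eq_mod, Nat.reduceMod, Nat.reduceAdd]
  module

theorem trace_Vinv_Z3_general (N n N₁ : ℕ) (hn : 0 < n) (hN₁ : 0 < N₁)
    (σe2 σ12 σ22 σ32 : ℝ) (hσe : 0 < σe2) (h1 : 0 ≤ σ12) (h2 : 0 ≤ σ22) (h3 : 0 ≤ σ32)
    (l1 l2 l3 : ℝ) (hl1 : l1 = σe2 + N₁ * σ12)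
    (hl2 : l2 = σe2 + N₁ * σ12 + n * N₁ * σ22)
    (hl3 : l3 = σe2 + N₁ * σ12 + n * N₁ * σ22 + 2 * n * N₁ * σ32) :
    ((Vmat N n N₁ σe2 σ12 σ22 σ32)⁻¹ * (Z3 N n N₁ * (Z3 N n N₁)ᵀ)).trace =
      (1 / l1) * N * (2 * ((n : ℝ) - 1)) * N₁ + (1 / l2) * N * N₁ + (1 / l3) * N * N₁ := by
  have hP := completeOrthogonalIdempotents_levelProj N n N₁
  have hne : ∀ i, ![σe2, l1, l2, l3] i ≠ 0 := by
    simp only [Fin.forall_fin_succ, IsEmpty.forall_iff, cons_val_zero, cons_val_succ]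
    subst hl1 hl2 hl3
    refine ⟨?_, ?_, ?_, ?_, trivial⟩ <;> positivity
  rw [Vmat_eq_sum_smul_levelProj, ← hl3, ← hl2, ← hl1,
    inv_eq_right_inv (hP.sum_smul_mul_sum_inv_smul hne), Z3_mul_transpose_eq_sum_smul_levelProj,
    hP.toOrthogonalIdempotents.sum_smul_mul_sum_smul, trace_sum]
  simp only [trace_smul, trace_levelProj hn.ne' hN₁.ne', smul_eq_mul, Fin.sum_univ_four,
    cons_val_zero, cons_val_one, cons_val, mul_zero, zero_mul, zero_add]
  ring

/-- `tr(V⁻¹ Z₃ Z₃ᵀ) = (1/λ₁)·N·2(n−1)·N₁ + (1/λ₂)·N·N₁ + (1/λ₃)·N·N₁`. -/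
theorem trace_Vinv_Z3 (N n N₁ : ℕ) (hN : 0 < N) (hn : 0 < n) (hN₁ : 0 < N₁)
    (σe2 σ12 σ22 σ32 : ℝ) (hσe : 0 < σe2) (h1 : 0 ≤ σ12) (h2 : 0 ≤ σ22) (h3 : 0 ≤ σ32)
    (l1 l2 l3 : ℝ) (hl1 : l1 = σe2 + N₁ * σ12)
    (hl2 : l2 = σe2 + N₁ * σ12 + n * N₁ * σ22)
    (hl3 : l3 = σe2 + N₁ * σ12 + n * N₁ * σ22 + 2 * n * N₁ * σ32) :
    ((Vmat N n N₁ σe2 σ12 σ22 σ32)⁻¹ * (Z3 N n N₁ * (Z3 N n N₁)ᵀ)).trace =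
      (1 / l1) * N * (2 * ((n : ℝ) - 1)) * N₁ + (1 / l2) * N * N₁ + (1 / l3) * N * N₁ :=
  trace_Vinv_Z3_general N n N₁ hn hN₁ σe2 σ12 σ22 σ32 hσe h1 h2 h3 l1 l2 l3 hl1 hl2 hl3
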